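/- Left commutative cut (leftist substitution): if Γ and U are suspension-normal, U is stable, Γ ; L ⊢ A⁺ is derivable, and Γ ; A⁺ ⊢ U is derivable, then Γ ; L ⊢ U is derivable in the focused sequent calculus for polarized intuitionistic logic. -/

import Mathlib

/-
Cut admissibility is proved as four mutually dependent statements. The principal cuts
`Γ ⊢ [A⁺]` against `Γ ; A⁺, Ω ⊢ U` and `Γ ; · ⊢ A⁻` against `Γ ; [A⁻] ⊢ U` decompose the cut
formula; the rightist and leftist substitutions commute a cut past the rules of one derivation
until it becomes principal. Each substitution is a structural induction on that derivation,
parameterised by the principal cut at the same formula, while the principal cuts recurse on the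
cut formula and use the substitutions only at its immediate subformulas. Suspension normality is
what lets the principal cuts go through: a non-atomic formula is never suspended in `Γ` or `U`,
so the `id⁺` and `id⁻` rules only ever meet atoms.
-/

namespace StructuralFocalization

/- Polarized propositional intuitionistic logic -/
mutual
inductive PProp : Type
  | atom : Nat → PProp
  | down : NProp → PProp
  | bot  : PProp
  | or   : PProp → PProp → PProp
  | top  : PProp
  | and  : PProp → PProp → PProp
inductive NProp : Type
  | atom : Nat → NProp
  | up   : PProp → NProp
  | imp  : PProp → NProp → NProp
  | top  : NProp
  | and  : NProp → NProp → NProp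
end

/- Hypotheses: negative propositions or suspended positives ⟨A⁺⟩ -/
inductive Hyp : Type
  | neg  : NProp → Hyp
  | susp : PProp → Hyp

/- Succedents: A⁺, A⁻, or suspended ⟨A⁻⟩ -/
inductive Succ : Type
  | pos  : PProp → Succ
  | neg  : NProp → Succ
  | susp : NProp → Succ

abbrev Ctx := List Hyp

def Succ.stable : Succ → Prop
  | .pos _ => True
  | .susp _ => True
  | .neg _ => False

def Hyp.suspNormal : Hyp → Prop
  | .susp (PProp.atom _) => True
  | .susp _ => False
  | .neg _ => True

def Ctx.suspNormal (Γ : Ctx) : Prop := ∀ h ∈ Γ, h.suspNormal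

def Succ.suspNormal : Succ → Prop
  | .susp (NProp.atom _) => True
  | .susp _ => False
  | _ => True

/- The focused sequent calculus (Figures 3 and 4 of "Structural focalization",
   with the generalized id⁺/id⁻ rules for arbitrary suspended propositions). -/
mutual
/-- Right focus: Γ ⊢ [A⁺] -/
inductive RFoc : Ctx → PProp → Prop
  | idP {Γ A} : Hyp.susp A ∈ Γ → RFoc Γ A
  | downR {Γ A} : Inv Γ [] (Succ.neg A) → RFoc Γ (PProp.down A)
  | orR1 {Γ A B} : RFoc Γ A → RFoc Γ (PProp.or A B)
  | orR2 {Γ A B} : RFoc Γ B → RFoc Γ (PProp.or A B)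
  | topR {Γ} : RFoc Γ PProp.top
  | andR {Γ A B} : RFoc Γ A → RFoc Γ B → RFoc Γ (PProp.and A B)
/-- Inversion: Γ ; Ω ⊢ U -/
inductive Inv : Ctx → List PProp → Succ → Prop
  | focR {Γ A} : RFoc Γ A → Inv Γ [] (Succ.pos A)
  | focL {Γ A U} : Hyp.neg A ∈ Γ → Succ.stable U → LFoc Γ A U → Inv Γ [] U
  | etaP {Γ p Ω U} : Inv (Hyp.susp (PProp.atom p) :: Γ) Ω U → Inv Γ (PProp.atom p :: Ω) U
  | downL {Γ A Ω U} : Inv (Hyp.neg A :: Γ) Ω U → Inv Γ (PProp.down A :: Ω) U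
  | botL {Γ Ω U} : Inv Γ (PProp.bot :: Ω) U
  | orL {Γ A B Ω U} : Inv Γ (A :: Ω) U → Inv Γ (B :: Ω) U → Inv Γ (PProp.or A B :: Ω) U
  | topPL {Γ Ω U} : Inv Γ Ω U → Inv Γ (PProp.top :: Ω) U
  | andPL {Γ A B Ω U} : Inv Γ (A :: B :: Ω) U → Inv Γ (PProp.and A B :: Ω) U
  | etaN {Γ p} : Inv Γ [] (Succ.susp (NProp.atom p)) → Inv Γ [] (Succ.neg (NProp.atom p))
  | upR {Γ A} : Inv Γ [] (Succ.pos A) → Inv Γ [] (Succ.neg (NProp.up A))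
  | impR {Γ A B} : Inv Γ [A] (Succ.neg B) → Inv Γ [] (Succ.neg (NProp.imp A B))
  | topNR {Γ} : Inv Γ [] (Succ.neg NProp.top)
  | andNR {Γ A B} : Inv Γ [] (Succ.neg A) → Inv Γ [] (Succ.neg B) →
      Inv Γ [] (Succ.neg (NProp.and A B))
/-- Left focus: Γ ; [A⁻] ⊢ U -/
inductive LFoc : Ctx → NProp → Succ → Prop
  | idN {Γ A} : LFoc Γ A (Succ.susp A)
  | upL {Γ A U} : Inv Γ [A] U → LFoc Γ (NProp.up A) U
  | impL {Γ A B U} : RFoc Γ A → LFoc Γ B U → LFoc Γ (NProp.imp A B) U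
  | andL1 {Γ A B U} : LFoc Γ A U → LFoc Γ (NProp.and A B) U
  | andL2 {Γ A B U} : LFoc Γ B U → LFoc Γ (NProp.and A B) U
end

/- Unpolarized propositions and Kleene's G3 -/
inductive UProp : Type
  | atom : Nat → UProp
  | bot  : UProp
  | or   : UProp → UProp → UProp
  | top  : UProp
  | and  : UProp → UProp → UProp
  | imp  : UProp → UProp → UProp

inductive G3 : List UProp → UProp → Prop
  | init {Γ p} : UProp.atom p ∈ Γ → G3 Γ (UProp.atom p)
  | botL {Γ Q} : UProp.bot ∈ Γ → G3 Γ Q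
  | orR1 {Γ A B} : G3 Γ A → G3 Γ (UProp.or A B)
  | orR2 {Γ A B} : G3 Γ B → G3 Γ (UProp.or A B)
  | orL {Γ A B Q} : UProp.or A B ∈ Γ → G3 (A :: Γ) Q → G3 (B :: Γ) Q → G3 Γ Q
  | topR {Γ} : G3 Γ UProp.top
  | andR {Γ A B} : G3 Γ A → G3 Γ B → G3 Γ (UProp.and A B)
  | andL1 {Γ A B Q} : UProp.and A B ∈ Γ → G3 (A :: Γ) Q → G3 Γ Q
  | andL2 {Γ A B Q} : UProp.and A B ∈ Γ → G3 (B :: Γ) Q → G3 Γ Q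
  | impR {Γ A B} : G3 (A :: Γ) B → G3 Γ (UProp.imp A B)
  | impL {Γ A B Q} : UProp.imp A B ∈ Γ → G3 Γ A → G3 (B :: Γ) Q → G3 Γ Q

/-- G3 with an ordered auxiliary context Ψ: Γ; Ψ ⊢ Q -/
inductive G3Psi : List UProp → List UProp → UProp → Prop
  | cons {Γ P Ψ Q} : G3Psi (P :: Γ) Ψ Q → G3Psi Γ (P :: Ψ) Q
  | nil {Γ Q} : G3 Γ Q → G3Psi Γ [] Q

/- Erasure -/
mutual
def eraseP : PProp → UProp
  | .atom p => .atom p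
  | .down A => eraseN A
  | .bot => .bot
  | .or A B => .or (eraseP A) (eraseP B)
  | .top => .top
  | .and A B => .and (eraseP A) (eraseP B)
def eraseN : NProp → UProp
  | .atom p => .atom p
  | .up A => eraseP A
  | .imp A B => .imp (eraseP A) (eraseN B)
  | .top => .top
  | .and A B => .and (eraseN A) (eraseN B)
end

def eraseHyp : Hyp → UProp
  | .neg A => eraseN A
  | .susp A => eraseP A

def eraseCtx (Γ : Ctx) : List UProp := Γ.map eraseHyp

def eraseSucc : Succ → UProp
  | .pos A => eraseP A
  | .neg A => eraseN A
  | .susp A => eraseN A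

theorem Ctx.suspNormal.cons {h : Hyp} {Γ : Ctx} (hh : h.suspNormal) (hΓ : Γ.suspNormal) :
    Ctx.suspNormal (h :: Γ) :=
  List.forall_mem_cons.mpr ⟨hh, hΓ⟩

theorem cons_subset_swap {α : Type*} {a b : α} {Δ Γ : List α} (h : Δ ⊆ b :: Γ) :
    a :: Δ ⊆ b :: a :: Γ :=
  List.Subset.trans (List.cons_subset_cons a h) (List.Perm.swap b a Γ).subset

mutual
theorem RFoc.weaken {Γ Γ' : Ctx} {A : PProp} (hs : Γ ⊆ Γ') : RFoc Γ A → RFoc Γ' A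
  | .idP h => .idP (hs h)
  | .downR d => .downR (d.weaken hs)
  | .orR1 d => .orR1 (d.weaken hs)
  | .orR2 d => .orR2 (d.weaken hs)
  | .topR => .topR
  | .andR d e => .andR (d.weaken hs) (e.weaken hs)

theorem Inv.weaken {Γ Γ' : Ctx} {Ω : List PProp} {U : Succ} (hs : Γ ⊆ Γ') :
    Inv Γ Ω U → Inv Γ' Ω U
  | .focR d => .focR (d.weaken hs)
  | .focL h st d => .focL (hs h) st (d.weaken hs)
  | .etaP d => .etaP (d.weaken (List.cons_subset_cons _ hs))
  | .downL d => .downL (d.weaken (List.cons_subset_cons _ hs))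
  | .botL => .botL
  | .orL d e => .orL (d.weaken hs) (e.weaken hs)
  | .topPL d => .topPL (d.weaken hs)
  | .andPL d => .andPL (d.weaken hs)
  | .etaN d => .etaN (d.weaken hs)
  | .upR d => .upR (d.weaken hs)
  | .impR d => .impR (d.weaken hs)
  | .topNR => .topNR
  | .andNR d e => .andNR (d.weaken hs) (e.weaken hs)

theorem LFoc.weaken {Γ Γ' : Ctx} {B : NProp} {U : Succ} (hs : Γ ⊆ Γ') :
    LFoc Γ B U → LFoc Γ' B U
  | .idN => .idN
  | .upL d => .upL (d.weaken hs)
  | .impL d e => .impL (d.weaken hs) (e.weaken hs)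
  | .andL1 d => .andL1 (d.weaken hs)
  | .andL2 d => .andL2 (d.weaken hs)
end

theorem Inv.weaken_cons {Γ : Ctx} {Ω : List PProp} {U : Succ} (h : Hyp) (d : Inv Γ Ω U) :
    Inv (h :: Γ) Ω U :=
  d.weaken (List.subset_cons_self _ _)

def PosPrincipalCut (A : PProp) : Prop :=
  ∀ {Γ Ω U}, Γ.suspNormal → U.suspNormal → RFoc Γ A → Inv Γ (A :: Ω) U → Inv Γ Ω U

def NegPrincipalCut (B : NProp) : Prop :=
  ∀ {Γ U}, Γ.suspNormal → U.suspNormal → U.stable →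
    Inv Γ [] (.neg B) → LFoc Γ B U → Inv Γ [] U

mutual
theorem RFoc.rightist_subst {B : NProp} {Δ Γ : Ctx} {A : PProp} (d : RFoc Δ A)
    (hB : NegPrincipalCut B) (hs : Δ ⊆ Hyp.neg B :: Γ) (hΓ : Γ.suspNormal)
    (dB : Inv Γ [] (.neg B)) : RFoc Γ A :=
  match d with
  | .idP h => .idP (by simpa using hs h)
  | .downR d => .downR (d.rightist_subst hB hs hΓ dB trivial)
  | .orR1 d => .orR1 (d.rightist_subst hB hs hΓ dB)
  | .orR2 d => .orR2 (d.rightist_subst hB hs hΓ dB)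
  | .topR => .topR
  | .andR d e => .andR (d.rightist_subst hB hs hΓ dB) (e.rightist_subst hB hs hΓ dB)

theorem Inv.rightist_subst {B : NProp} {Δ Γ : Ctx} {Ω : List PProp} {U : Succ} (d : Inv Δ Ω U)
    (hB : NegPrincipalCut B) (hs : Δ ⊆ Hyp.neg B :: Γ) (hΓ : Γ.suspNormal)
    (dB : Inv Γ [] (.neg B)) (hU : U.suspNormal) : Inv Γ Ω U :=
  match d with
  | .focR d => .focR (d.rightist_subst hB hs hΓ dB)
  | .focL h st d => by
    have d' := d.rightist_subst hB hs hΓ dB hU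
    rcases List.mem_cons.mp (hs h) with h' | h'
    · cases h'
      exact hB hΓ hU st dB d'
    · exact .focL h' st d'
  | .etaP d => .etaP (d.rightist_subst hB (cons_subset_swap hs) (hΓ.cons trivial)
      (dB.weaken_cons _) hU)
  | .downL d => .downL (d.rightist_subst hB (cons_subset_swap hs) (hΓ.cons trivial)
      (dB.weaken_cons _) hU)
  | .botL => .botL
  | .orL d e => .orL (d.rightist_subst hB hs hΓ dB hU) (e.rightist_subst hB hs hΓ dB hU)
  | .topPL d => .topPL (d.rightist_subst hB hs hΓ dB hU)
  | .andPL d => .andPL (d.rightist_subst hB hs hΓ dB hU)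
  | .etaN d => .etaN (d.rightist_subst hB hs hΓ dB trivial)
  | .upR d => .upR (d.rightist_subst hB hs hΓ dB trivial)
  | .impR d => .impR (d.rightist_subst hB hs hΓ dB trivial)
  | .topNR => .topNR
  | .andNR d e =>
    .andNR (d.rightist_subst hB hs hΓ dB trivial) (e.rightist_subst hB hs hΓ dB trivial)

theorem LFoc.rightist_subst {B : NProp} {Δ Γ : Ctx} {C : NProp} {U : Succ} (d : LFoc Δ C U)
    (hB : NegPrincipalCut B) (hs : Δ ⊆ Hyp.neg B :: Γ) (hΓ : Γ.suspNormal)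
    (dB : Inv Γ [] (.neg B)) (hU : U.suspNormal) : LFoc Γ C U :=
  match d with
  | .idN => .idN
  | .upL d => .upL (d.rightist_subst hB hs hΓ dB hU)
  | .impL d e => .impL (d.rightist_subst hB hs hΓ dB) (e.rightist_subst hB hs hΓ dB hU)
  | .andL1 d => .andL1 (d.rightist_subst hB hs hΓ dB hU)
  | .andL2 d => .andL2 (d.rightist_subst hB hs hΓ dB hU)
end

-- The succedent is a variable `V` with `hV : V = .pos A` so that recursion on `d` is structural.
mutual
theorem Inv.leftist_subst {A : PProp} {U V : Succ} {Γ : Ctx} {Ω : List PProp} (d : Inv Γ Ω V)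
    (hV : V = .pos A) (hA : PosPrincipalCut A) (hU : U.suspNormal) (hst : U.stable)
    (hΓ : Γ.suspNormal) (E : Inv Γ [A] U) : Inv Γ Ω U :=
  match d, hV with
  | .focR v, rfl => hA hΓ hU v E
  | .focL h _ d, hV => .focL h hst (d.leftist_subst hV hA hU hst hΓ E)
  | .etaP d, hV => .etaP (d.leftist_subst hV hA hU hst (hΓ.cons trivial) (E.weaken_cons _))
  | .downL d, hV => .downL (d.leftist_subst hV hA hU hst (hΓ.cons trivial) (E.weaken_cons _))
  | .botL, _ => .botL
  | .orL d e, hV =>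
    .orL (d.leftist_subst hV hA hU hst hΓ E) (e.leftist_subst hV hA hU hst hΓ E)
  | .topPL d, hV => .topPL (d.leftist_subst hV hA hU hst hΓ E)
  | .andPL d, hV => .andPL (d.leftist_subst hV hA hU hst hΓ E)

theorem LFoc.leftist_subst {A : PProp} {U V : Succ} {Γ : Ctx} {C : NProp} (d : LFoc Γ C V)
    (hV : V = .pos A) (hA : PosPrincipalCut A) (hU : U.suspNormal) (hst : U.stable)
    (hΓ : Γ.suspNormal) (E : Inv Γ [A] U) : LFoc Γ C U :=
  match d, hV with
  | .upL d, hV => .upL (d.leftist_subst hV hA hU hst hΓ E)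
  | .impL v d, hV => .impL v (d.leftist_subst hV hA hU hst hΓ E)
  | .andL1 d, hV => .andL1 (d.leftist_subst hV hA hU hst hΓ E)
  | .andL2 d, hV => .andL2 (d.leftist_subst hV hA hU hst hΓ E)
end

mutual
theorem PProp.posPrincipalCut : (A : PProp) → PosPrincipalCut A
  | .atom _ => fun hΓ _ v E => by
    cases E with
    | etaP E =>
      cases v with
      | idP h => exact E.weaken (List.cons_subset.mpr ⟨h, List.Subset.refl _⟩)
  | .down B => fun hΓ hU v E => by
    cases E with
    | downL E =>
      cases v with
      | downR dB => exact E.rightist_subst B.negPrincipalCut (List.Subset.refl _) hΓ dB hU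
      -- Γ suspends only atoms, so a value of non-atomic type is not an `id⁺`.
      | idP h => nomatch hΓ _ h
  | .bot => fun hΓ _ v _ => by
    cases v with
    | idP h => nomatch hΓ _ h
  | .or A₁ A₂ => fun hΓ hU v E => by
    cases E with
    | orL E₁ E₂ =>
      cases v with
      | orR1 v => exact A₁.posPrincipalCut hΓ hU v E₁
      | orR2 v => exact A₂.posPrincipalCut hΓ hU v E₂
      | idP h => nomatch hΓ _ h
  | .top => fun _ _ _ E => by
    cases E with
    | topPL E => exact E
  | .and A₁ A₂ => fun hΓ hU v E => by
    cases E with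
    | andPL E =>
      cases v with
      | andR v₁ v₂ => exact A₂.posPrincipalCut hΓ hU v₂ (A₁.posPrincipalCut hΓ hU v₁ E)
      | idP h => nomatch hΓ _ h

theorem NProp.negPrincipalCut : (B : NProp) → NegPrincipalCut B
  | .atom _ => fun _ _ _ dB E => by
    cases E with
    | idN =>
      cases dB with
      | etaN d => exact d
      | focL _ st _ => nomatch st
  | .up A => fun hΓ hU hst dB E => by
    cases E with
    | idN => nomatch hU
    | upL E =>
      cases dB with
      | upR d => exact d.leftist_subst rfl A.posPrincipalCut hU hst hΓ E
      | focL _ st _ => nomatch st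
  | .imp A B => fun hΓ hU hst dB E => by
    cases E with
    | idN => nomatch hU
    | impL v E =>
      cases dB with
      | impR d => exact B.negPrincipalCut hΓ hU hst (A.posPrincipalCut hΓ trivial v d) E
      | focL _ st _ => nomatch st
  | .top => fun _ hU _ _ E => by
    cases E with
    | idN => nomatch hU
  | .and B₁ B₂ => fun hΓ hU hst dB E => by
    cases E with
    | idN => nomatch hU
    | andL1 E =>
      cases dB with
      | andNR d _ => exact B₁.negPrincipalCut hΓ hU hst d E
      | focL _ st _ => nomatch st
    | andL2 E =>
      cases dB with
      | andNR _ d => exact B₂.negPrincipalCut hΓ hU hst d E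
      | focL _ st _ => nomatch st
end

/-- The two conjuncts are the cases `L = Ω` (inversion) and `L = [B⁻]` (left focus). -/
theorem left_commutative_cut {Γ : Ctx} {A : PProp} {U : Succ}
    (hΓ : Ctx.suspNormal Γ) (hU : Succ.suspNormal U) (hst : Succ.stable U)
    (h2 : Inv Γ [A] U) :
    (∀ Ω, Inv Γ Ω (Succ.pos A) → Inv Γ Ω U) ∧
    (∀ B, LFoc Γ B (Succ.pos A) → LFoc Γ B U) :=
  ⟨fun _ d => d.leftist_subst rfl A.posPrincipalCut hU hst hΓ h2,
    fun _ d => d.leftist_subst rfl A.posPrincipalCut hU hst hΓ h2⟩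

end StructuralFocalization
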